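/- Let e ~ N(0,1), τ ≥ 1, and X a standard Gaussian vector independent of e, with s a unit vector. Then the conditional random variable ⟨X,s⟩·e given {|e| ≥ τ} is sub-exponential with sub-exponential norm at most C·τ for a universal constant C; i.e., sup_{p≥1} p^{-1}·E[|⟨X,s⟩·e|^p | |e| ≥ τ]^{1/p} ≤ C·τ. -/

import Mathlib

open MeasureTheory ProbabilityTheory RealInnerProductSpace

/-- The standard Gaussian measure `N(0, I_d)` on `ℝ^d`. -/
noncomputable def stdGaussian (d : ℕ) : Measure (EuclideanSpace ℝ (Fin d)) :=
  (Measure.pi fun _ : Fin d => gaussianReal 0 1).map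
    (MeasurableEquiv.toLp 2 (Fin d → ℝ))

/-- `(X, e)` with `X ~ N(0, I_d)` and `e ~ N(0,1)` independent. -/
noncomputable def jointGaussian (d : ℕ) : Measure (EuclideanSpace ℝ (Fin d) × ℝ) :=
  (stdGaussian d).prod (gaussianReal 0 1)

/-!
Since `X` is standard Gaussian and `‖s‖ = 1`, `⟪X, s⟫ ~ N(0, 1)`, and it is independent of `e`, so
the conditional moment factors as `E|Z|^p · E[|e|^p ; |e| ≥ τ] / P(|e| ≥ τ)`. Both factors are
controlled by `t^p ≤ √(2p)^p e^{t²/4}`. Against the Gaussian density it gives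
`E|Z|^p ≤ √2 · √(2p)^p`. On the tail `y ≥ τ ≥ 1`, writing `y ≤ τ (1 + (y - τ))`, it gives
`y^p e^{-y²/2} ≤ √e (√(2p) τ)^p e^{τ²/2 - τ y}`, whose integral is `√e (√(2p) τ)^p e^{-τ²/2} / τ`,
while the density is at least `e^{-3/2} e^{-τ²/2}` on `[τ, τ + 1/τ]`. Hence the conditional
moment is at most `√2 e² (2 p τ)^p`, and its `p`-th root divided by `p` is `O(τ)`.
-/

open Real Set
open scoped NNReal

lemma rpow_le_sqrt_two_mul_rpow_mul_exp {t p : ℝ} (ht : 0 ≤ t) (hp : 0 < p) :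
    t ^ p ≤ √(2 * p) ^ p * exp (t ^ 2 / 4) := by
  have hc : 0 < √(2 * p) := by positivity
  have hc2 : √(2 * p) ^ 2 = 2 * p := sq_sqrt (by positivity)
  -- `x ≤ 1 + x ^ 2 / 2 ≤ exp (x ^ 2 / 2)` at `x = t / √(2p)`
  have hbase : t / √(2 * p) ≤ exp (t ^ 2 / (4 * p)) := by
    have h1 : t / √(2 * p) ≤ 1 + (t / √(2 * p)) ^ 2 / 2 := by
      nlinarith [sq_nonneg (t / √(2 * p) - 1)]
    have h2 : (t / √(2 * p)) ^ 2 / 2 = t ^ 2 / (4 * p) := by rw [div_pow, hc2]; ring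
    linarith [add_one_le_exp (t ^ 2 / (4 * p))]
  calc t ^ p = √(2 * p) ^ p * (t / √(2 * p)) ^ p := by
        rw [div_rpow ht hc.le]; field_simp
    _ ≤ √(2 * p) ^ p * exp (t ^ 2 / (4 * p)) ^ p := by gcongr
    _ = √(2 * p) ^ p * exp (t ^ 2 / 4) := by rw [← exp_mul]; field_simp

lemma gaussianPDFReal_zero_one (y : ℝ) :
    gaussianPDFReal 0 1 y = (√(2 * π))⁻¹ * exp (-y ^ 2 / 2) := by
  simp [gaussianPDFReal]

lemma integral_gaussianReal_eq (f : ℝ → ℝ) :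
    ∫ y, f y ∂gaussianReal 0 1 = (√(2 * π))⁻¹ * ∫ y, exp (-y ^ 2 / 2) * f y := by
  rw [integral_gaussianReal_eq_integral_smul one_ne_zero, ← integral_const_mul]
  simp only [gaussianPDFReal_zero_one, smul_eq_mul, mul_assoc]

lemma setIntegral_gaussianReal_eq (f : ℝ → ℝ) {s : Set ℝ} (hs : MeasurableSet s) :
    ∫ y in s, f y ∂gaussianReal 0 1 = (√(2 * π))⁻¹ * ∫ y in s, exp (-y ^ 2 / 2) * f y := by
  rw [← integral_indicator hs, integral_gaussianReal_eq, ← integral_indicator hs]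
  simp_rw [indicator_mul_right]

lemma integrable_gaussianReal_iff {f : ℝ → ℝ} :
    Integrable f (gaussianReal 0 1) ↔ Integrable (fun y => exp (-y ^ 2 / 2) * f y) := by
  rw [gaussianReal_of_var_ne_zero 0 one_ne_zero, integrable_withDensity_iff_integrable_smul'
    (measurable_gaussianPDF 0 1) (ae_of_all _ fun _ => gaussianPDF_lt_top)]
  simp_rw [toReal_gaussianPDF, gaussianPDFReal_zero_one, smul_eq_mul, mul_assoc]
  exact integrable_const_mul_iff (IsUnit.mk0 _ (by positivity)) _

lemma exp_neg_sq_div_two_mul_exp_sq_div_four (y : ℝ) :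
    exp (-y ^ 2 / 2) * exp (y ^ 2 / 4) = exp (-(1 / 4) * y ^ 2) := by
  rw [← exp_add]; ring_nf

lemma integrable_exp_sq_div_four_gaussianReal :
    Integrable (fun y => exp (y ^ 2 / 4)) (gaussianReal 0 1) := by
  rw [integrable_gaussianReal_iff]
  simp_rw [exp_neg_sq_div_two_mul_exp_sq_div_four]
  exact integrable_exp_neg_mul_sq (by norm_num)

lemma integral_exp_sq_div_four_gaussianReal :
    ∫ y, exp (y ^ 2 / 4) ∂gaussianReal 0 1 = √2 := by
  rw [integral_gaussianReal_eq]
  simp_rw [exp_neg_sq_div_two_mul_exp_sq_div_four]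
  rw [integral_gaussian, show π / (1 / 4) = 2 * (2 * π) by ring, sqrt_mul zero_le_two (2 * π),
    mul_comm, mul_inv_cancel_right₀ (by positivity)]

lemma abs_rpow_le_sqrt_two_mul_rpow_mul_exp {p : ℝ} (hp : 0 < p) (y : ℝ) :
    |y| ^ p ≤ √(2 * p) ^ p * exp (y ^ 2 / 4) := by
  simpa using rpow_le_sqrt_two_mul_rpow_mul_exp (abs_nonneg y) hp

lemma integrable_abs_rpow_gaussianReal {p : ℝ} (hp : 0 < p) :
    Integrable (fun y => |y| ^ p) (gaussianReal 0 1) := by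
  refine (integrable_exp_sq_div_four_gaussianReal.const_mul (√(2 * p) ^ p)).mono'
    (continuous_abs.rpow_const fun _ => Or.inr hp.le).aestronglyMeasurable
    (ae_of_all _ fun y => ?_)
  rw [norm_of_nonneg (by positivity)]
  exact abs_rpow_le_sqrt_two_mul_rpow_mul_exp hp y

lemma integral_abs_rpow_gaussianReal_le {p : ℝ} (hp : 0 < p) :
    ∫ y, |y| ^ p ∂gaussianReal 0 1 ≤ √2 * √(2 * p) ^ p := by
  calc ∫ y, |y| ^ p ∂gaussianReal 0 1 ≤ ∫ y, √(2 * p) ^ p * exp (y ^ 2 / 4) ∂gaussianReal 0 1 :=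
        integral_mono_of_nonneg (ae_of_all _ fun y => by positivity)
          (integrable_exp_sq_div_four_gaussianReal.const_mul _)
          (ae_of_all _ (abs_rpow_le_sqrt_two_mul_rpow_mul_exp hp))
    _ = √2 * √(2 * p) ^ p := by
        rw [integral_const_mul, integral_exp_sq_div_four_gaussianReal, mul_comm]

lemma map_inner_stdGaussian {E : Type*} [NormedAddCommGroup E] [InnerProductSpace ℝ E]
    [FiniteDimensional ℝ E] [MeasurableSpace E] [BorelSpace E] {s : E} (hs : ‖s‖ = 1) :
    (ProbabilityTheory.stdGaussian E).map (fun x => ⟪x, s⟫) = gaussianReal 0 1 := by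
  have h := IsGaussian.map_eq_gaussianReal (μ := ProbabilityTheory.stdGaussian E) (innerSL ℝ s)
  simp only [integral_strongDual_stdGaussian, variance_dual_stdGaussian, innerSL_apply_norm,
    hs] at h
  convert h using 2
  · ext x; simp [real_inner_comm]
  · simp

lemma stdGaussian_eq_stdGaussian_euclideanSpace (d : ℕ) :
    stdGaussian d = ProbabilityTheory.stdGaussian (EuclideanSpace ℝ (Fin d)) :=
  map_pi_eq_stdGaussian

instance (d : ℕ) : IsProbabilityMeasure (stdGaussian d) := by
  rw [stdGaussian_eq_stdGaussian_euclideanSpace]; infer_instance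

instance (v : ℝ≥0) : (gaussianReal 0 v).IsNegInvariant :=
  ⟨by simpa [Measure.neg_def] using gaussianReal_map_neg (μ := 0) (v := v)⟩

lemma setIntegral_le_abs_eq_two_mul {μ : Measure ℝ} [μ.IsNegInvariant] {f : ℝ → ℝ}
    (hf : ∀ y, f (-y) = f y) (hfi : Integrable f μ) {τ : ℝ} (hτ : 0 < τ) :
    ∫ y in {y | τ ≤ |y|}, f y ∂μ = 2 * ∫ y in Ici τ, f y ∂μ := by
  have hset : {y : ℝ | τ ≤ |y|} = Iic (-τ) ∪ Ici τ := by
    ext y; simp [le_abs', or_comm]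
  have hneg : ∫ y in Iic (-τ), f y ∂μ = ∫ y in Ici τ, f y ∂μ := by
    rw [← (Measure.measurePreserving_neg μ).setIntegral_preimage_emb measurableEmbedding_neg f]
    simp [hf]
  rw [hset, setIntegral_union (Iic_disjoint_Ici.2 (by linarith)) measurableSet_Ici
    hfi.integrableOn hfi.integrableOn, hneg, two_mul]

lemma rpow_mul_exp_neg_sq_le {τ p y : ℝ} (hτ : 1 ≤ τ) (hp : 0 < p) (hy : τ ≤ y) :
    y ^ p * exp (-y ^ 2 / 2)
      ≤ exp (1 / 2) * (√(2 * p) * τ) ^ p * exp (τ ^ 2 / 2) * exp (-τ * y) := by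
  have hτ0 : 0 ≤ τ := by linarith
  have hu : 0 ≤ 1 + (y - τ) := by linarith
  have hy_le : y ^ p ≤ τ ^ p * (1 + (y - τ)) ^ p := by
    rw [← mul_rpow hτ0 hu]
    exact rpow_le_rpow (by linarith) (by nlinarith) hp.le
  -- the Gaussian factor `exp (-(y - τ) ^ 2 / 2)` absorbs `exp ((1 + (y - τ)) ^ 2 / 4)`
  have hexp : exp ((1 + (y - τ)) ^ 2 / 4) * exp (-y ^ 2 / 2)
      ≤ exp (1 / 2) * exp (τ ^ 2 / 2) * exp (-τ * y) := by
    simp only [← exp_add]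
    exact exp_le_exp.2 (by nlinarith [sq_nonneg (y - τ - 1)])
  calc y ^ p * exp (-y ^ 2 / 2)
      ≤ τ ^ p * (√(2 * p) ^ p * exp ((1 + (y - τ)) ^ 2 / 4)) * exp (-y ^ 2 / 2) := by
        gcongr
        exact hy_le.trans (by gcongr; exact rpow_le_sqrt_two_mul_rpow_mul_exp hu hp)
    _ = (√(2 * p) * τ) ^ p * (exp ((1 + (y - τ)) ^ 2 / 4) * exp (-y ^ 2 / 2)) := by
        rw [mul_rpow (by positivity) hτ0]; ring
    _ ≤ (√(2 * p) * τ) ^ p * (exp (1 / 2) * exp (τ ^ 2 / 2) * exp (-τ * y)) := by gcongr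
    _ = _ := by ring

lemma integrable_exp_neg_sq_div_two : Integrable fun y : ℝ => exp (-y ^ 2 / 2) := by
  simpa [neg_div, div_eq_inv_mul] using integrable_exp_neg_mul_sq (b := 1 / 2) (by norm_num)

lemma setIntegral_Ioi_abs_rpow_mul_exp_neg_sq_le {τ p : ℝ} (hτ : 1 ≤ τ) (hp : 0 < p) :
    ∫ y in Ioi τ, exp (-y ^ 2 / 2) * |y| ^ p
      ≤ exp (1 / 2) * (√(2 * p) * τ) ^ p * (exp (-τ ^ 2 / 2) / τ) := by
  have hτ0 : 0 < τ := by linarith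
  have hint : IntegrableOn (fun y => exp (-τ * y)) (Ioi τ) :=
    integrableOn_exp_mul_Ioi (neg_lt_zero.2 hτ0) τ
  calc ∫ y in Ioi τ, exp (-y ^ 2 / 2) * |y| ^ p
      ≤ ∫ y in Ioi τ, exp (1 / 2) * (√(2 * p) * τ) ^ p * exp (τ ^ 2 / 2) * exp (-τ * y) := by
        refine integral_mono_of_nonneg (ae_of_all _ fun y => by positivity) (hint.const_mul _)
          ((ae_restrict_iff' measurableSet_Ioi).2 (ae_of_all _ fun y (hy : τ < y) => ?_))
        dsimp only
        rw [abs_of_pos (hτ0.trans hy), mul_comm]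
        exact rpow_mul_exp_neg_sq_le hτ hp hy.le
    _ = exp (1 / 2) * (√(2 * p) * τ) ^ p * (exp (-τ ^ 2 / 2) / τ) := by
        rw [integral_const_mul, integral_exp_mul_Ioi (neg_lt_zero.2 hτ0)]
        field_simp
        rw [← exp_add]; ring_nf

lemma mul_exp_neg_sq_div_le_setIntegral_Ioi {τ : ℝ} (hτ : 1 ≤ τ) :
    exp (-3 / 2) * (exp (-τ ^ 2 / 2) / τ) ≤ ∫ y in Ioi τ, exp (-y ^ 2 / 2) := by
  have hτ0 : 0 < τ := by linarith
  have hbound : ∀ y ∈ Ioc τ (τ + τ⁻¹), exp (-3 / 2) * exp (-τ ^ 2 / 2) ≤ exp (-y ^ 2 / 2) := by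
    intro y hy
    have h1 : τ * τ⁻¹ = 1 := mul_inv_cancel₀ hτ0.ne'
    have h2 : τ⁻¹ ≤ 1 := inv_le_one_of_one_le₀ hτ
    rw [← exp_add]
    exact exp_le_exp.2 (by nlinarith [hy.1, hy.2, inv_pos.2 hτ0])
  calc exp (-3 / 2) * (exp (-τ ^ 2 / 2) / τ)
      = exp (-3 / 2) * exp (-τ ^ 2 / 2) * volume.real (Ioc τ (τ + τ⁻¹)) := by
        rw [Real.volume_real_Ioc_of_le (le_add_of_nonneg_right (by positivity))]; ring
    _ ≤ ∫ y in Ioc τ (τ + τ⁻¹), exp (-y ^ 2 / 2) :=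
        setIntegral_ge_of_const_le_real measurableSet_Ioc measure_Ioc_lt_top.ne hbound
          integrable_exp_neg_sq_div_two.integrableOn
    _ ≤ ∫ y in Ioi τ, exp (-y ^ 2 / 2) :=
        setIntegral_mono_set integrable_exp_neg_sq_div_two.integrableOn
          (ae_of_all _ fun _ => (exp_pos _).le) Ioc_subset_Ioi_self.eventuallyLE

lemma setIntegral_Ici_abs_rpow_le_mul_measureReal {τ p : ℝ} (hτ : 1 ≤ τ) (hp : 0 < p) :
    ∫ y in Ici τ, |y| ^ p ∂gaussianReal 0 1
      ≤ exp 2 * (√(2 * p) * τ) ^ p * (gaussianReal 0 1).real (Ici τ) := by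
  have hP : (gaussianReal 0 1).real (Ici τ) = (√(2 * π))⁻¹ * ∫ y in Ioi τ, exp (-y ^ 2 / 2) := by
    rw [← mul_one ((gaussianReal 0 1).real _), ← smul_eq_mul, ← setIntegral_const,
      setIntegral_gaussianReal_eq _ measurableSet_Ici, integral_Ici_eq_integral_Ioi]
    simp
  have hU := setIntegral_Ioi_abs_rpow_mul_exp_neg_sq_le hτ hp
  rw [show exp (1 / 2) = exp 2 * exp (-3 / 2) by rw [← exp_add]; norm_num] at hU
  rw [hP, setIntegral_gaussianReal_eq _ measurableSet_Ici, integral_Ici_eq_integral_Ioi,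
    mul_left_comm]
  gcongr
  calc _ ≤ _ := hU
    _ = exp 2 * (√(2 * p) * τ) ^ p * (exp (-3 / 2) * (exp (-τ ^ 2 / 2) / τ)) := by ring
    _ ≤ _ := by gcongr; exact mul_exp_neg_sq_div_le_setIntegral_Ioi hτ

lemma setIntegral_abs_rpow_le_mul_measureReal {τ p : ℝ} (hτ : 1 ≤ τ) (hp : 0 < p) :
    ∫ y in {y | τ ≤ |y|}, |y| ^ p ∂gaussianReal 0 1
      ≤ exp 2 * (√(2 * p) * τ) ^ p * (gaussianReal 0 1).real {y | τ ≤ |y|} := by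
  have hτ0 : 0 < τ := by linarith
  have hP : (gaussianReal 0 1).real {y | τ ≤ |y|} = 2 * (gaussianReal 0 1).real (Ici τ) := by
    simpa using setIntegral_le_abs_eq_two_mul (μ := gaussianReal 0 1) (f := fun _ => (1 : ℝ))
      (fun _ => rfl) (integrable_const 1) hτ0
  rw [hP, setIntegral_le_abs_eq_two_mul (fun y => by rw [abs_neg])
    (integrable_abs_rpow_gaussianReal hp) hτ0]
  linarith [setIntegral_Ici_abs_rpow_le_mul_measureReal hτ hp]

lemma rpow_one_div_le_mul {a c x p : ℝ} (ha : 0 ≤ a) (hc : 1 ≤ c) (hx : 0 ≤ x) (hp : 1 ≤ p)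
    (h : a ≤ c * x ^ p) : a ^ (1 / p) ≤ c * x := by
  have hp0 : 0 < p := by linarith
  calc a ^ (1 / p) ≤ (c * x ^ p) ^ (1 / p) := by gcongr
    _ = c ^ (1 / p) * x := by
        rw [mul_rpow (by linarith) (by positivity), ← rpow_mul hx, mul_one_div_cancel hp0.ne',
          rpow_one]
    _ ≤ c * x := by
        gcongr
        exact rpow_le_self_of_one_le hc ((div_le_one hp0).2 hp)

lemma setIntegral_abs_inner_mul_rpow_jointGaussian {d : ℕ} {s : EuclideanSpace ℝ (Fin d)}
    (hs : ‖s‖ = 1) (τ p : ℝ) :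
    ∫ q in {q : EuclideanSpace ℝ (Fin d) × ℝ | τ ≤ |q.2|}, |⟪q.1, s⟫ * q.2| ^ p ∂jointGaussian d
      = (∫ y, |y| ^ p ∂gaussianReal 0 1) * ∫ y in {y | τ ≤ |y|}, |y| ^ p ∂gaussianReal 0 1 := by
  have hset : {q : EuclideanSpace ℝ (Fin d) × ℝ | τ ≤ |q.2|} = univ ×ˢ {y | τ ≤ |y|} := by
    ext; simp
  rw [hset, jointGaussian, ← Measure.prod_restrict, Measure.restrict_univ]
  simp_rw [abs_mul, mul_rpow (abs_nonneg _) (abs_nonneg _)]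
  rw [integral_prod_mul (fun x => |⟪x, s⟫| ^ p) (fun y => |y| ^ p),
    stdGaussian_eq_stdGaussian_euclideanSpace,
    ← integral_map (φ := fun x => ⟪x, s⟫) (f := fun y => |y| ^ p) (by fun_prop)
      (measurable_abs.pow_const p).aestronglyMeasurable,
    map_inner_stdGaussian hs]

lemma measureReal_jointGaussian (d : ℕ) (τ : ℝ) :
    (jointGaussian d).real {q | τ ≤ |q.2|} = (gaussianReal 0 1).real {y | τ ≤ |y|} := by
  rw [show {q : EuclideanSpace ℝ (Fin d) × ℝ | τ ≤ |q.2|} = univ ×ˢ {y | τ ≤ |y|} by ext; simp,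
    jointGaussian, measureReal_prod_prod, probReal_univ, one_mul]

theorem stmt15 :
    ∃ C > (0 : ℝ), ∀ (d : ℕ) (s : EuclideanSpace ℝ (Fin d)), ‖s‖ = 1 →
      ∀ τ : ℝ, 1 ≤ τ → ∀ p : ℝ, 1 ≤ p →
      p⁻¹ * ((∫ q in {q : EuclideanSpace ℝ (Fin d) × ℝ | τ ≤ |q.2|},
            |⟪q.1, s⟫ * q.2| ^ p ∂jointGaussian d)
          / ((jointGaussian d) {q | τ ≤ |q.2|}).toReal) ^ (1 / p)
        ≤ C * τ := by
  refine ⟨2 * (√2 * exp 2), by positivity, fun d s hs τ hτ p hp => ?_⟩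
  have hp0 : 0 < p := by linarith
  rw [← measureReal_def, setIntegral_abs_inner_mul_rpow_jointGaussian hs,
    measureReal_jointGaussian, mul_div_assoc]
  have hmoment : (∫ y, |y| ^ p ∂gaussianReal 0 1) *
      ((∫ y in {y | τ ≤ |y|}, |y| ^ p ∂gaussianReal 0 1) / (gaussianReal 0 1).real {y | τ ≤ |y|})
      ≤ (√2 * exp 2) * (2 * p * τ) ^ p := by
    calc _ ≤ (√2 * √(2 * p) ^ p) * (exp 2 * (√(2 * p) * τ) ^ p) := by
          refine mul_le_mul (integral_abs_rpow_gaussianReal_le hp0)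
            (div_le_of_le_mul₀ measureReal_nonneg (by positivity)
              (setIntegral_abs_rpow_le_mul_measureReal hτ hp0)) ?_ (by positivity)
          exact div_nonneg (integral_nonneg fun _ => by positivity) measureReal_nonneg
      _ = (√2 * exp 2) * (2 * p * τ) ^ p := by
          rw [mul_mul_mul_comm, ← mul_rpow (by positivity) (by positivity), ← mul_assoc,
            mul_self_sqrt (by positivity)]
  calc _ ≤ p⁻¹ * ((√2 * exp 2) * (2 * p * τ)) := by
        gcongr
        refine rpow_one_div_le_mul (by positivity) ?_ (by positivity) hp hmoment
        nlinarith [one_le_sqrt.2 one_le_two, one_le_exp zero_le_two]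
    _ = 2 * (√2 * exp 2) * τ := by field_simp
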